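/- arXiv:1612.03754 — 2 statements merged into one kernel-verified Lean document; each statement's English description precedes it below -/
import Mathlib

section
/- Let G be a commutative topological group, let n, s ≥ 1, and let {h_{i,j}} (1 ≤ i ≤ n, 1 ≤ j ≤ s) be elements of G such that for every (i_1, …, i_s) ∈ {1, …, n}^s the set {h_{i_1,1}, …, h_{i_s,s}} topologically generates G. Suppose f : G → ℂ is continuous and there exist exponential polynomials P_1, …, P_s : G → ℂ such that Δ_{h_{n,k}} ⋯ Δ_{h_{2,k}} Δ_{h_{1,k}} f = P_k for every k = 1, …, s. Then f is an exponential polynomial, i.e. span{τ_h f : h ∈ G} is finite-dimensional over ℂ. -/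
noncomputable section

/-- Forward difference operator: `Δ_h f x = f (x + h) - f x`. -/
def fwdDiffOp {G M : Type*} [AddCommGroup G] [AddCommGroup M] (h : G) (f : G → M) : G → M :=
  fun x => f (x + h) - f x

/-- Mixed differences along a list of steps; the head of the list is applied outermost,
so `mixedDiff [g_m, …, g_1] f = Δ_{g_m} ⋯ Δ_{g_1} f`. -/
def mixedDiff {G M : Type*} [AddCommGroup G] [AddCommGroup M] : List G → (G → M) → (G → M)
  | [], f => f
  | h :: t, f => fwdDiffOp h (mixedDiff t f)

/-- Translation operator: `τ_h f x = f (x + h)`. -/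
def transOp {G M : Type*} [AddCommGroup G] (h : G) (f : G → M) : G → M :=
  fun x => f (x + h)

/-- The span of all translates of `g`. -/
def tauSpan {G : Type*} [AddCommGroup G] (g : G → ℂ) : Submodule ℂ (G → ℂ) :=
  Submodule.span ℂ (Set.range fun h : G => transOp h g)

/-- `f` is an exponential polynomial iff the span of its translates is finite dimensional. -/
def IsExpPoly {G : Type*} [AddCommGroup G] (f : G → ℂ) : Prop :=
  FiniteDimensional ℂ (tauSpan f)

/-!
A step `a` with `Δ_a f` in a finite-dimensional translation-invariant space `W` gives
`τ_a f = f + Δ_a f ∈ span {f} ⊔ W`. Such steps form a subgroup (`Δ_{a+b} f = Δ_a f + τ_a Δ_b f`),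
which is closed when `f` is continuous because finite-dimensional subspaces of `G → ℂ` are
closed; so it is all of `G` as soon as it contains a topologically generating set.

For the mixed differences, induct on the total number of steps: if every column `k` is nonempty
with first step `a k`, then `Δ_{a k} f` satisfies the hypotheses with column `k` shortened, so by
induction its translates span a finite-dimensional space, and the first observation applies to `f`
with `E = {a k}`, which generates `G` since it is a selection of one step per column.
-/

section Differences

variable {G M : Type*} [AddCommGroup G] [AddCommGroup M]

theorem fwdDiffOp_zero (f : G → M) : fwdDiffOp 0 f = 0 := by
  funext x
  simp [fwdDiffOp]

theorem fwdDiffOp_add (a b : G) (f : G → M) :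
    fwdDiffOp (a + b) f = fwdDiffOp a f + transOp a (fwdDiffOp b f) := by
  funext x
  simp only [fwdDiffOp, transOp, Pi.add_apply, add_assoc]
  abel

theorem fwdDiffOp_neg (a : G) (f : G → M) :
    fwdDiffOp (-a) f = -transOp (-a) (fwdDiffOp a f) := by
  funext x
  simp [fwdDiffOp, transOp]

theorem transOp_eq_add_fwdDiffOp (a : G) (f : G → M) : transOp a f = f + fwdDiffOp a f := by
  funext x
  simp [fwdDiffOp, transOp]

theorem fwdDiffOp_comm (a b : G) (f : G → M) :
    fwdDiffOp a (fwdDiffOp b f) = fwdDiffOp b (fwdDiffOp a f) := by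
  funext x
  simp only [fwdDiffOp, add_right_comm x b a]
  abel

theorem mixedDiff_fwdDiffOp (l : List G) (a : G) (f : G → M) :
    mixedDiff l (fwdDiffOp a f) = fwdDiffOp a (mixedDiff l f) := by
  induction l with
  | nil => rfl
  | cons b t ih => simp only [mixedDiff, ih, fwdDiffOp_comm]

theorem mixedDiff_tail_fwdDiffOp_head {l : List G} (hl : l ≠ []) (f : G → M) :
    mixedDiff l.tail (fwdDiffOp (l.head hl) f) = mixedDiff l f := by
  conv_rhs => rw [← List.cons_head_tail hl]
  exact mixedDiff_fwdDiffOp _ _ _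

end Differences

section Invariant

variable {G : Type*} [AddCommGroup G]

/-- `LinearMap.funLeft ℂ ℂ (· + a)` is `transOp a` as a linear map. -/
def IsTransInvariant (N : Submodule ℂ (G → ℂ)) : Prop :=
  ∀ a : G, N ≤ N.comap (LinearMap.funLeft ℂ ℂ (· + a))

namespace IsTransInvariant

variable {N W : Submodule ℂ (G → ℂ)}

theorem transOp_mem (hN : IsTransInvariant N) (a : G) {u : G → ℂ} (hu : u ∈ N) :
    transOp a u ∈ N :=
  hN a hu

theorem fwdDiffOp_mem (hN : IsTransInvariant N) (a : G) {u : G → ℂ} (hu : u ∈ N) :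
    fwdDiffOp a u ∈ N :=
  sub_mem (hN.transOp_mem a hu) hu

theorem sup (hN : IsTransInvariant N) (hW : IsTransInvariant W) : IsTransInvariant (N ⊔ W) :=
  fun a => sup_le ((hN a).trans (Submodule.comap_mono le_sup_left))
    ((hW a).trans (Submodule.comap_mono le_sup_right))

theorem iSup {ι : Sort*} {N : ι → Submodule ℂ (G → ℂ)} (hN : ∀ i, IsTransInvariant (N i)) :
    IsTransInvariant (⨆ i, N i) :=
  fun a => iSup_le fun i => (hN i a).trans (Submodule.comap_mono (le_iSup N i))

end IsTransInvariant

theorem mem_tauSpan_self (g : G → ℂ) : g ∈ tauSpan g :=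
  Submodule.subset_span ⟨0, funext fun x => by simp [transOp]⟩

theorem isTransInvariant_tauSpan (g : G → ℂ) : IsTransInvariant (tauSpan g) := by
  intro a
  rw [tauSpan, Submodule.span_le]
  rintro _ ⟨b, rfl⟩
  exact Submodule.subset_span ⟨b + a, funext fun x => by simp [transOp, add_assoc, add_comm a]⟩

theorem tauSpan_le_of_mem {N : Submodule ℂ (G → ℂ)} (hN : IsTransInvariant N) {f : G → ℂ}
    (hf : f ∈ N) : tauSpan f ≤ N := by
  rw [tauSpan, Submodule.span_le]
  rintro _ ⟨a, rfl⟩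
  exact hN.transOp_mem a hf

theorem tauSpan_le_span_singleton_sup {W : Submodule ℂ (G → ℂ)} {f : G → ℂ}
    (hf : ∀ a : G, fwdDiffOp a f ∈ W) : tauSpan f ≤ Submodule.span ℂ {f} ⊔ W := by
  rw [tauSpan, Submodule.span_le]
  rintro _ ⟨a, rfl⟩
  show transOp a f ∈ _
  rw [transOp_eq_add_fwdDiffOp]
  exact add_mem (Submodule.mem_sup_left (Submodule.mem_span_singleton_self f))
    (Submodule.mem_sup_right (hf a))

end Invariant

theorem sum_length_update_tail_lt {ι α : Type*} [Fintype ι] [DecidableEq ι] (cols : ι → List α)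
    {k : ι} (hk : cols k ≠ []) :
    ∑ j, (Function.update cols k (cols k).tail j).length < ∑ j, (cols j).length := by
  refine Finset.sum_lt_sum (fun j _ => ?_) ⟨k, Finset.mem_univ k, ?_⟩
  · rcases eq_or_ne j k with rfl | hjk
    · simp
    · simp [Function.update_of_ne hjk]
  · simpa using List.length_pos_iff.mpr hk

section Topological

variable {G : Type*} [AddCommGroup G]

def diffStepSubgroup (f : G → ℂ) {W : Submodule ℂ (G → ℂ)} (hW : IsTransInvariant W) :
    AddSubgroup G where
  carrier := {a | fwdDiffOp a f ∈ W}
  zero_mem' := by simp [fwdDiffOp_zero]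
  add_mem' {a b} ha hb := by
    rw [Set.mem_ofPred_eq, fwdDiffOp_add]
    exact add_mem ha (hW.transOp_mem a hb)
  neg_mem' {a} ha := by
    rw [Set.mem_ofPred_eq, fwdDiffOp_neg]
    exact neg_mem (hW.transOp_mem (-a) ha)

variable [TopologicalSpace G] [ContinuousAdd G]

theorem isClosed_diffStepSubgroup {f : G → ℂ} (hf : Continuous f) {W : Submodule ℂ (G → ℂ)}
    [FiniteDimensional ℂ W] (hW : IsTransInvariant W) :
    IsClosed (diffStepSubgroup f hW : Set G) :=
  W.closed_of_finiteDimensional.preimage <|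
    continuous_pi fun x => (hf.comp (continuous_const_add x)).sub continuous_const

theorem fwdDiffOp_mem_of_closure_eq_univ {f : G → ℂ} (hf : Continuous f)
    {W : Submodule ℂ (G → ℂ)} [FiniteDimensional ℂ W] (hW : IsTransInvariant W) {E : Set G}
    (hE : ∀ e ∈ E, fwdDiffOp e f ∈ W)
    (hgen : closure (AddSubgroup.closure E : Set G) = Set.univ) (a : G) :
    fwdDiffOp a f ∈ W := by
  have hle : closure (AddSubgroup.closure E : Set G) ⊆ diffStepSubgroup f hW :=
    closure_minimal ((AddSubgroup.closure_le _).mpr hE) (isClosed_diffStepSubgroup hf hW)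
  exact hle (hgen ▸ Set.mem_univ a)

theorem finiteDimensional_tauSpan_of_fwdDiffOp_mem {f : G → ℂ} (hf : Continuous f)
    {W : Submodule ℂ (G → ℂ)} [FiniteDimensional ℂ W] (hW : IsTransInvariant W) {E : Set G}
    (hE : ∀ e ∈ E, fwdDiffOp e f ∈ W)
    (hgen : closure (AddSubgroup.closure E : Set G) = Set.univ) :
    FiniteDimensional ℂ (tauSpan f) :=
  Submodule.finiteDimensional_of_le <|
    tauSpan_le_span_singleton_sup (fwdDiffOp_mem_of_closure_eq_univ hf hW hE hgen)

theorem finiteDimensional_tauSpan_of_mixedDiff_mem {ι : Type*} [Fintype ι] [DecidableEq ι]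
    (cols : ι → List G) {N : Submodule ℂ (G → ℂ)} [FiniteDimensional ℂ N]
    (hN : IsTransInvariant N) {f : G → ℂ} (hf : Continuous f)
    (hfN : ∀ k, mixedDiff (cols k) f ∈ N)
    (hgen : ∀ sel : ι → G, (∀ k, sel k ∈ cols k) →
      closure (AddSubgroup.closure (Set.range sel) : Set G) = Set.univ) :
    FiniteDimensional ℂ (tauSpan f) := by
  by_cases hempty : ∃ k, cols k = []
  · obtain ⟨k, hk⟩ := hempty
    have hf_mem : f ∈ N := by simpa [hk, mixedDiff] using hfN k
    exact Submodule.finiteDimensional_of_le (tauSpan_le_of_mem hN hf_mem)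
  push Not at hempty
  let a k := (cols k).head (hempty k)
  have hdiff (k : ι) : FiniteDimensional ℂ (tauSpan (fwdDiffOp (a k) f)) := by
    -- found by `termination_by`
    have hshorter := sum_length_update_tail_lt cols (hempty k)
    refine finiteDimensional_tauSpan_of_mixedDiff_mem (Function.update cols k (cols k).tail) hN
      ((hf.comp (continuous_add_const (a k))).sub hf) (fun j => ?_) fun sel hsel =>
        hgen sel fun j => ?_
    · rcases eq_or_ne j k with rfl | hjk
      · simpa [a, mixedDiff_tail_fwdDiffOp_head] using hfN j
      · rw [Function.update_of_ne hjk, mixedDiff_fwdDiffOp]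
        exact hN.fwdDiffOp_mem _ (hfN j)
    · rcases eq_or_ne j k with rfl | hjk
      · exact List.mem_of_mem_tail (by simpa using hsel j)
      · simpa [Function.update_of_ne hjk] using hsel j
  refine finiteDimensional_tauSpan_of_fwdDiffOp_mem hf
    (hN.sup (IsTransInvariant.iSup fun k => isTransInvariant_tauSpan (fwdDiffOp (a k) f)))
    (E := Set.range a) ?_ (hgen a fun k => List.head_mem _)
  rintro _ ⟨k, rfl⟩
  exact Submodule.mem_sup_right (Submodule.mem_iSup_of_mem k (mem_tauSpan_self _))
termination_by ∑ k, (cols k).length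

end Topological

theorem montel_mixed_topological_general {G : Type*} [AddCommGroup G] [TopologicalSpace G]
    [IsTopologicalAddGroup G] {n s : ℕ}
    (h : Fin n → Fin s → G)
    (hgen : ∀ idx : Fin s → Fin n,
      closure ((AddSubgroup.closure (Set.range fun j : Fin s => h (idx j) j) :
        AddSubgroup G) : Set G) = Set.univ)
    (f : G → ℂ) (hcont : Continuous f) (P : Fin s → G → ℂ)
    (hP : ∀ k : Fin s, IsExpPoly (P k))
    (hf : ∀ k : Fin s, mixedDiff (List.ofFn fun i : Fin n => h i k).reverse f = P k) :
    IsExpPoly f := by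
  have : ∀ k, FiniteDimensional ℂ (tauSpan (P k)) := hP
  refine finiteDimensional_tauSpan_of_mixedDiff_mem (fun k => (List.ofFn fun i => h i k).reverse)
    (IsTransInvariant.iSup fun k => isTransInvariant_tauSpan (P k)) hcont
    (fun k => (hf k).symm ▸ Submodule.mem_iSup_of_mem k (mem_tauSpan_self (P k)))
    fun sel hsel => ?_
  choose idx hidx using fun k => List.mem_ofFn.mp (List.mem_reverse.mp (hsel k))
  simpa only [hidx] using hgen idx

/-- **Montel-type theorem for mixed differences, topological version (Corollary 1).**
If for every choice `(i_1, …, i_s) ∈ {1, …, n}^s` the set `{h i_1 1, …, h i_s s}` topologically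
generates the commutative topological group `G`, `f` is continuous and
`Δ_{h n k} ⋯ Δ_{h 1 k} f = P k` with each `P k` an exponential polynomial, then `f` is an
exponential polynomial. -/
theorem montel_mixed_topological {G : Type*} [AddCommGroup G] [TopologicalSpace G]
    [IsTopologicalAddGroup G] {n s : ℕ} (hn : 1 ≤ n) (hs : 1 ≤ s)
    (h : Fin n → Fin s → G)
    (hgen : ∀ idx : Fin s → Fin n,
      closure ((AddSubgroup.closure (Set.range fun j : Fin s => h (idx j) j) :
        AddSubgroup G) : Set G) = Set.univ)
    (f : G → ℂ) (hcont : Continuous f) (P : Fin s → G → ℂ)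
    (hP : ∀ k : Fin s, IsExpPoly (P k))
    (hf : ∀ k : Fin s, mixedDiff (List.ofFn fun i : Fin n => h i k).reverse f = P k) :
    IsExpPoly f :=
  montel_mixed_topological_general h hgen f hcont P hP hf
end
end

section
/- Let G be a commutative group and let h_1, …, h_s ∈ G generate G as a group. Suppose f : G → ℂ and there exist exponential polynomials P_1, …, P_s : G → ℂ such that Δ_{h_k} f = P_k for every k = 1, …, s. Then f is an exponential polynomial, i.e. span{τ_h f : h ∈ G} is finite-dimensional over ℂ. -/
noncomputable section

/-- Translation as a linear map. -/
def transLin {G : Type*} [AddCommGroup G] (g : G) : (G → ℂ) →ₗ[ℂ] (G → ℂ) where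
  toFun := transOp g
  map_add' := fun _ _ => rfl
  map_smul' := fun _ _ => rfl

lemma transOp_transOp {G : Type*} [AddCommGroup G] (a b : G) (p : G → ℂ) :
    transOp a (transOp b p) = transOp (b + a) p := by
  funext x
  show p (x + a + b) = p (x + (b + a))
  congr 1; abel

lemma transOp_zero {G : Type*} [AddCommGroup G] (p : G → ℂ) : transOp (0 : G) p = p := by
  funext x; simp [transOp]

lemma tauSpan_invariant {G : Type*} [AddCommGroup G] (g : G) (p : G → ℂ) :
    (tauSpan p).map (transLin g) ≤ tauSpan p := by
  rw [tauSpan, Submodule.map_span, Submodule.span_le]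
  rintro _ ⟨_, ⟨a, rfl⟩, rfl⟩
  exact Submodule.subset_span ⟨a + g, (transOp_transOp g a p).symm⟩

/-- **First-order case of the Montel-type theorem.** If `h 1, …, h s` generate the commutative
group `G` and `Δ_{h k} f = P k` with each `P k` an exponential polynomial, then `f` is an
exponential polynomial. -/
theorem montel_mixed_first_order {G : Type*} [AddCommGroup G] {s : ℕ}
    (h : Fin s → G)
    (hgen : AddSubgroup.closure (Set.range h) = ⊤)
    (f : G → ℂ) (P : Fin s → G → ℂ)
    (hP : ∀ k : Fin s, IsExpPoly (P k))
    (hf : ∀ k : Fin s, fwdDiffOp (h k) f = P k) :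
    IsExpPoly f := by
  classical
  set W : Submodule ℂ (G → ℂ) := ⨆ k, tauSpan (P k) with hWdef
  haveI : ∀ k : Fin s, FiniteDimensional ℂ (tauSpan (P k)) := hP
  haveI hWfd : FiniteDimensional ℂ W := Submodule.finiteDimensional_iSup _
  have hWinv : ∀ g : G, ∀ w ∈ W, transLin g w ∈ W := by
    intro g w hw
    have : W.map (transLin g) ≤ W := by
      rw [hWdef, Submodule.map_iSup]
      exact iSup_le fun k => le_trans (tauSpan_invariant g (P k)) (le_iSup (fun k => tauSpan (P k)) k)
    exact this ⟨w, hw, rfl⟩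
  have hPW : ∀ k, P k ∈ W := by
    intro k
    have : P k ∈ tauSpan (P k) :=
      Submodule.subset_span ⟨0, transOp_zero (P k)⟩
    exact le_iSup (fun k => tauSpan (P k)) k this
  -- the set of g with τ_g f - f ∈ W is a subgroup containing the generators
  let S : AddSubgroup G :=
    { carrier := {g | transOp g f - f ∈ W}
      zero_mem' := by
        show transOp (0 : G) f - f ∈ W
        rw [transOp_zero, sub_self]; exact W.zero_mem
      add_mem' := by
        intro a b ha hb
        have key : transOp (a + b) f - f
            = transLin b (transOp a f - f) + (transOp b f - f) := by
          funext x
          show f (x + (a + b)) - f x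
            = (f (x + b + a) - f (x + b)) + (f (x + b) - f x)
          rw [show x + (a + b) = x + b + a by abel]
          ring
        show transOp (a + b) f - f ∈ W
        rw [key]
        exact W.add_mem (hWinv b _ ha) hb
      neg_mem' := by
        intro a ha
        have key : transOp (-a) f - f = - transLin (-a) (transOp a f - f) := by
          funext x
          show f (x + -a) - f x = -(f (x + -a + a) - f (x + -a))
          simp
        show transOp (-a) f - f ∈ W
        rw [key]
        exact W.neg_mem (hWinv (-a) _ ha) }
  have hSall : ∀ g : G, transOp g f - f ∈ W := by
    intro g
    have : AddSubgroup.closure (Set.range h) ≤ S := by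
      rw [AddSubgroup.closure_le]
      rintro _ ⟨k, rfl⟩
      show transOp (h k) f - f ∈ W
      have : transOp (h k) f - f = P k := by
        funext x
        show f (x + h k) - f x = P k x
        rw [← hf k]; rfl
      rw [this]; exact hPW k
    have : S = ⊤ := top_le_iff.mp (hgen ▸ this)
    exact (S.mem_carrier).mp (this ▸ AddSubgroup.mem_top g)
  -- conclude: tauSpan f ≤ span{f} ⊔ W
  have hle : tauSpan f ≤ Submodule.span ℂ {f} ⊔ W := by
    rw [tauSpan, Submodule.span_le]
    rintro _ ⟨g, rfl⟩
    show transOp g f ∈ ↑(Submodule.span ℂ {f} ⊔ W)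
    have : transOp g f = f + (transOp g f - f) := by ring
    rw [this]
    exact Submodule.add_mem _
      (Submodule.mem_sup_left (Submodule.mem_span_singleton_self f))
      (Submodule.mem_sup_right (hSall g))
  haveI : FiniteDimensional ℂ (Submodule.span ℂ {f} ⊔ W : Submodule ℂ (G → ℂ)) :=
    Submodule.finiteDimensional_sup _ _
  exact Submodule.finiteDimensional_of_le hle
end
end
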